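/- Let φ be the action of ℤ on ℚ (additive group) with φ_n(x) = 2^n · x, and equip ℚ with positive cone ℚ_{≥0} and ℤ with positive cone ℕ. Then the smallest submonoid of ℚ ⋊_φ ℤ closed under conjugation containing ℚ_{≥0} × ℕ equals {(x,n) : n ≥ 1} ∪ (ℚ_{≥0} × {0}), which is the lexicographic cone; in particular it strictly contains the product cone ℚ_{≥0} × ℕ, so the corresponding point with the minimal compatible order is strong but not a rali. -/

import Mathlib

/-!
Conjugating `(x, n)` by `(a, b)` in `ℚ ⋊ ℤ` gives `((1 - 2 ^ n) a + 2 ^ b x, n)`. Taking `n = 1`,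
`x = 0` shows that the generated cone contains `(-a, 1)` for every `a`, hence every `(x, n)` with
`n ≥ 1`; taking `n = 0` shows that the union of `{n ≥ 1}` with `ℚ≥0 × {0}` is conjugation-closed,
so it is exactly the generated cone. The element `(-1, 1)` is then not in the product cone.
-/

namespace PreordGrp

/-- A positive cone on an additive group: a submonoid closed under conjugation.
It induces the preorder `x ≤ y ↔ -x + y ∈ P`. -/
def IsCone {G : Type*} [AddGroup G] (P : Set G) : Prop :=
  (0 : G) ∈ P ∧ (∀ x ∈ P, ∀ y ∈ P, x + y ∈ P) ∧ ∀ x ∈ P, ∀ a : G, a + x - a ∈ P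

/-- `x ≤ y` in the preorder induced by the cone `P`. -/
def coneLe {G : Type*} [AddGroup G] (P : Set G) (x y : G) : Prop := -x + y ∈ P

/-- `x ~ y` : both `x ≤ y` and `y ≤ x` in the preorder induced by `P`. -/
def coneSim {G : Type*} [AddGroup G] (P : Set G) (x y : G) : Prop :=
  coneLe P x y ∧ coneLe P y x

section SDP

variable {X B : Type*} [AddGroup X] [AddGroup B]

/-- An action of `B` on `X` by group automorphisms:
`φ 0 = id` and `φ (b + b') = φ b ∘ φ b'`. -/
def IsAction (φ : B → X ≃+ X) : Prop :=
  (∀ x : X, φ 0 x = x) ∧ ∀ b b' : B, ∀ x : X, φ (b + b') x = φ b (φ b' x)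

/-- Addition in the semidirect product `X ⋊_φ B`:
`(x, b) + (x', b') = (x + φ b x', b + b')`. -/
def sAdd (φ : B → X ≃+ X) (p q : X × B) : X × B := (p.1 + φ p.2 q.1, p.2 + q.2)

/-- Negation in the semidirect product `X ⋊_φ B`. -/
def sNeg (φ : B → X ≃+ X) (p : X × B) : X × B := (-(φ (-p.2) p.1), -p.2)

/-- A positive cone on `X ⋊_φ B`: contains `0`, closed under addition and
under conjugation `p ↦ g + p - g`. -/
def IsSCone (φ : B → X ≃+ X) (P : Set (X × B)) : Prop :=
  ((0, 0) : X × B) ∈ P ∧ (∀ p ∈ P, ∀ q ∈ P, sAdd φ p q ∈ P) ∧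
    ∀ p ∈ P, ∀ g : X × B, sAdd φ (sAdd φ g p) (sNeg φ g) ∈ P

/-- A compatible positive cone `P` on `X ⋊_φ B`:
(a) `(x, b) ∈ P → b ∈ PB`, (b) `(x, 0) ∈ P ↔ x ∈ PX`, (c) `b ∈ PB → (0, b) ∈ P`. -/
def IsCompatible (φ : B → X ≃+ X) (PX : Set X) (PB : Set B) (P : Set (X × B)) : Prop :=
  IsSCone φ P ∧ (∀ x b, (x, b) ∈ P → b ∈ PB) ∧
    (∀ x : X, (x, (0 : B)) ∈ P ↔ x ∈ PX) ∧ ∀ b ∈ PB, ((0 : X), b) ∈ P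

/-- The lexicographic cone: `(x, b)` with `b > 0`, or `b ~ 0` and `x ∈ PX`. -/
def lexCone (PX : Set X) (PB : Set B) : Set (X × B) :=
  {p | (p.2 ∈ PB ∧ -p.2 ∉ PB) ∨ (p.2 ∈ PB ∧ -p.2 ∈ PB ∧ p.1 ∈ PX)}

/-- The smallest positive cone (conjugation-closed submonoid) of `X ⋊_φ B`
containing the product cone `PX ×ˢ PB`. -/
def genCone (φ : B → X ≃+ X) (PX : Set X) (PB : Set B) : Set (X × B) :=
  ⋂₀ {Q : Set (X × B) | IsSCone φ Q ∧ PX ×ˢ PB ⊆ Q}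

end SDP

section General

variable {X B : Type*} [AddGroup X] [AddGroup B] {φ : B → X ≃+ X} {PX : Set X} {PB : Set B}

theorem isSCone_genCone : IsSCone φ (genCone φ PX PB) :=
  ⟨fun _ hQ => hQ.1.1,
    fun _ hp _ hq Q hQ => hQ.1.2.1 _ (hp Q hQ) _ (hq Q hQ),
    fun _ hp g Q hQ => hQ.1.2.2 _ (hp Q hQ) g⟩

theorem prod_subset_genCone : PX ×ˢ PB ⊆ genCone φ PX PB :=
  fun _ hp _ hQ => hQ.2 hp

theorem genCone_subset {Q : Set (X × B)} (hQ : IsSCone φ Q) (hPQ : PX ×ˢ PB ⊆ Q) :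
    genCone φ PX PB ⊆ Q :=
  Set.sInter_subset_of_mem ⟨hQ, hPQ⟩

end General

section Dyadic

variable {φ : ℤ → ℚ ≃+ ℚ}

theorem sAdd_eq_of_dyadic (hdef : ∀ (n : ℤ) (x : ℚ), φ n x = 2 ^ n * x) (p q : ℚ × ℤ) :
    sAdd φ p q = (p.1 + 2 ^ p.2 * q.1, p.2 + q.2) := by
  simp only [sAdd, hdef]

theorem conj_eq_of_dyadic (hdef : ∀ (n : ℤ) (x : ℚ), φ n x = 2 ^ n * x) (g p : ℚ × ℤ) :
    sAdd φ (sAdd φ g p) (sNeg φ g) = ((1 - 2 ^ p.2) * g.1 + 2 ^ g.2 * p.1, p.2) := by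
  have h2 : (2 : ℚ) ≠ 0 := two_ne_zero
  simp only [sAdd, sNeg, hdef, zpow_add₀ h2, zpow_neg, Prod.mk.injEq, add_neg_cancel_comm]
  refine ⟨?_, trivial⟩
  field_simp
  ring

def lexConeQZ : Set (ℚ × ℤ) := {p | 1 ≤ p.2} ∪ ({x : ℚ | 0 ≤ x} ×ˢ ({0} : Set ℤ))

theorem mem_lexConeQZ {p : ℚ × ℤ} : p ∈ lexConeQZ ↔ 1 ≤ p.2 ∨ (0 ≤ p.1 ∧ p.2 = 0) := by
  simp [lexConeQZ, Set.mem_prod]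

theorem lexConeQZ_eq_lexCone : lexConeQZ = lexCone {x : ℚ | 0 ≤ x} {n : ℤ | 0 ≤ n} := by
  ext ⟨x, n⟩
  simp only [mem_lexConeQZ, lexCone, Set.mem_ofPred_eq, Int.neg_nonneg]
  by_cases hx : 0 ≤ x <;>
    simp only [hx, true_and, and_true, false_and, and_false, or_false] <;>
    constructor <;> intro <;> omega

theorem isSCone_lexConeQZ (hdef : ∀ (n : ℤ) (x : ℚ), φ n x = 2 ^ n * x) :
    IsSCone φ lexConeQZ := by
  refine ⟨mem_lexConeQZ.2 (Or.inr ⟨le_rfl, rfl⟩), fun p hp q hq => ?_, fun p hp g => ?_⟩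
  · rw [sAdd_eq_of_dyadic hdef, mem_lexConeQZ]
    rw [mem_lexConeQZ] at hp hq
    rcases hp with hp | ⟨hx, hn⟩
    · omega
    rcases hq with hq | ⟨hy, hm⟩
    · omega
    · right
      simp only [hn, hm, zpow_zero, one_mul, add_zero]
      exact ⟨add_nonneg hx hy, trivial⟩
  · rw [conj_eq_of_dyadic hdef, mem_lexConeQZ]
    rw [mem_lexConeQZ] at hp
    rcases hp with hp | ⟨hx, hn⟩
    · exact Or.inl hp
    · right
      simp only [hn, zpow_zero, sub_self, zero_mul, zero_add]
      exact ⟨by positivity, trivial⟩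

theorem prod_subset_lexConeQZ :
    {x : ℚ | 0 ≤ x} ×ˢ {n : ℤ | 0 ≤ n} ⊆ lexConeQZ := by
  rintro ⟨x, n⟩ ⟨hx, hn⟩
  rw [mem_lexConeQZ]
  rcases (show (0 : ℤ) ≤ n from hn).eq_or_lt with hn | hn
  · exact Or.inr ⟨hx, hn.symm⟩
  · exact Or.inl hn

theorem lexConeQZ_subset_genCone (hdef : ∀ (n : ℤ) (x : ℚ), φ n x = 2 ^ n * x) :
    lexConeQZ ⊆ genCone φ {x : ℚ | 0 ≤ x} {n : ℤ | 0 ≤ n} := by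
  set G := genCone φ {x : ℚ | 0 ≤ x} {n : ℤ | 0 ≤ n}
  have hG : IsSCone φ G := isSCone_genCone
  have hprod : ∀ x n, 0 ≤ x → 0 ≤ n → ((x, n) : ℚ × ℤ) ∈ G :=
    fun x n hx hn => prod_subset_genCone ⟨hx, hn⟩
  have hlevel_one : ∀ x : ℚ, ((x, 1) : ℚ × ℤ) ∈ G := by
    intro x
    have := hG.2.2 _ (hprod 0 1 le_rfl zero_le_one) (-x, 0)
    rw [conj_eq_of_dyadic hdef] at this
    convert this using 1
    norm_num
  rintro ⟨x, n⟩ hp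
  rcases mem_lexConeQZ.1 hp with hn | ⟨hx, hn⟩
  · have := hG.2.1 _ (hlevel_one x) _ (hprod 0 (n - 1) le_rfl (by omega))
    rw [sAdd_eq_of_dyadic hdef] at this
    convert this using 1
    simp
  · exact hprod x n hx hn.ge

end Dyadic

theorem stmt11_general (φ : ℤ → ℚ ≃+ ℚ)
    (hdef : ∀ (n : ℤ) (x : ℚ), φ n x = 2 ^ n * x) :
    genCone φ {x : ℚ | 0 ≤ x} {n : ℤ | 0 ≤ n}
        = {p : ℚ × ℤ | 1 ≤ p.2} ∪ ({x : ℚ | 0 ≤ x} ×ˢ ({0} : Set ℤ)) ∧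
    {p : ℚ × ℤ | 1 ≤ p.2} ∪ ({x : ℚ | 0 ≤ x} ×ˢ ({0} : Set ℤ))
        = lexCone {x : ℚ | 0 ≤ x} {n : ℤ | 0 ≤ n} ∧
    {x : ℚ | 0 ≤ x} ×ˢ {n : ℤ | 0 ≤ n}
        ⊂ genCone φ {x : ℚ | 0 ≤ x} {n : ℤ | 0 ≤ n} := by
  have hgen : genCone φ {x : ℚ | 0 ≤ x} {n : ℤ | 0 ≤ n} = lexConeQZ :=
    (genCone_subset (isSCone_lexConeQZ hdef) prod_subset_lexConeQZ).antisymm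
      (lexConeQZ_subset_genCone hdef)
  refine ⟨hgen, lexConeQZ_eq_lexCone, prod_subset_genCone, fun hsub => ?_⟩
  have hmem : ((-1 : ℚ), (1 : ℤ)) ∈ genCone φ {x : ℚ | 0 ≤ x} {n : ℤ | 0 ≤ n} :=
    hgen ▸ mem_lexConeQZ.2 (Or.inl le_rfl)
  exact absurd (hsub hmem).1 (by norm_num)

/-- for the action `φ n x = 2^n * x` of `(ℤ, ℕ)` on `(ℚ, ℚ≥0)`,
the minimal compatible cone on `ℚ ⋊_φ ℤ` is
`{(x, n) | n ≥ 1} ∪ (ℚ≥0 × {0})`, which is the lexicographic cone; in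
particular it strictly contains the product cone, so the minimal point is
strong but not a rali. -/
theorem stmt11 (φ : ℤ → ℚ ≃+ ℚ) (hφ : IsAction φ)
    (hdef : ∀ (n : ℤ) (x : ℚ), φ n x = 2 ^ n * x) :
    genCone φ {x : ℚ | 0 ≤ x} {n : ℤ | 0 ≤ n}
        = {p : ℚ × ℤ | 1 ≤ p.2} ∪ ({x : ℚ | 0 ≤ x} ×ˢ ({0} : Set ℤ)) ∧
    {p : ℚ × ℤ | 1 ≤ p.2} ∪ ({x : ℚ | 0 ≤ x} ×ˢ ({0} : Set ℤ))
        = lexCone {x : ℚ | 0 ≤ x} {n : ℤ | 0 ≤ n} ∧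
    {x : ℚ | 0 ≤ x} ×ˢ {n : ℤ | 0 ≤ n}
        ⊂ genCone φ {x : ℚ | 0 ≤ x} {n : ℤ | 0 ≤ n} :=
  stmt11_general φ hdef

end PreordGrp
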